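/- arXiv:2503.07387 — 3 statements merged into one kernel-verified Lean document; each statement's English description precedes it below -/
import Mathlib

section
/- Let T > 0, let σ be Lebesgue measure on [0,T], and let r⁺, r⁻ ∈ L¹₊([0,T]) satisfy ∫₀ᵗ r⁺ dσ ≤ ∫₀ᵗ r⁻ dσ for all t ∈ [0,T] and ∫₀ᵀ r⁺ dσ = ∫₀ᵀ r⁻ dσ. Define ξ: [0,T] → [0,T] by ξ(t) := min{t̂ ∈ [0,T] : ∫₀^{t̂} r⁻ dσ = ∫₀ᵗ r⁺ dσ}. Then ∫_{ξ⁻¹([0,t])} r⁺ dσ = ∫₀ᵗ r⁻ dσ for every t ∈ [0,T]; consequently the image measure (r⁺·σ)∘ξ⁻¹ coincides with the measure r⁻·σ on the Borel σ-algebra of [0,T]. In particular (r⁺·σ)∘ξ⁻¹ is absolutely continuous with respect to σ. -/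
open MeasureTheory Set
open scoped ENNReal

/-!
STATEMENT 11 (the pushforward identity of the no-waiting lemma):
Let `r⁺, r⁻ ∈ L¹₊([0,T])` with `∫₀ᵗ r⁺ ≤ ∫₀ᵗ r⁻` for all `t ∈ [0,T]` and equal
total mass on `[0,T]`, and let `ξ(t) := min{t̂ ∈ [0,T] : ∫₀^{t̂} r⁻ = ∫₀ᵗ r⁺}`
(a Borel measurable function). Then `∫_{ξ⁻¹([0,t])} r⁺ = ∫₀ᵗ r⁻` for all
`t ∈ [0,T]`; consequently the image measure `(r⁺·σ) ∘ ξ⁻¹` equals the measure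
`r⁻·σ`, and in particular it is absolutely continuous with respect to `σ`.
-/
theorem pushforward_of_gross_outflow_is_gross_inflow
    (T : ℝ) (hT : 0 < T) (rp rm : ℝ → ℝ)
    (hrp0 : ∀ t, 0 ≤ rp t) (hrpi : IntegrableOn rp (Icc 0 T))
    (hrm0 : ∀ t, 0 ≤ rm t) (hrmi : IntegrableOn rm (Icc 0 T))
    (hle : ∀ t ∈ Icc (0:ℝ) T,
      (∫ s in Icc (0:ℝ) t, rp s) ≤ ∫ s in Icc (0:ℝ) t, rm s)
    (hTeq : (∫ s in Icc (0:ℝ) T, rp s) = ∫ s in Icc (0:ℝ) T, rm s)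
    (ξ : ℝ → ℝ) (hξmeas : Measurable ξ)
    (hξ : ∀ t ∈ Icc (0:ℝ) T,
      IsLeast {s | s ∈ Icc (0:ℝ) T ∧
        (∫ x in Icc (0:ℝ) s, rm x) = ∫ x in Icc (0:ℝ) t, rp x} (ξ t)) :
    (∀ t ∈ Icc (0:ℝ) T,
      (∫ s in {s | s ∈ Icc (0:ℝ) T ∧ ξ s ∈ Icc (0:ℝ) t}, rp s) =
        ∫ s in Icc (0:ℝ) t, rm s) ∧
    (((volume.restrict (Icc (0:ℝ) T)).withDensity fun t => ENNReal.ofReal (rp t)).map ξ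
      = (volume.restrict (Icc (0:ℝ) T)).withDensity fun t => ENNReal.ofReal (rm t)) ∧
    ((((volume.restrict (Icc (0:ℝ) T)).withDensity fun t => ENNReal.ofReal (rp t)).map ξ)
      ≪ volume) := by
  set F : ℝ → ℝ := fun t => ∫ s in Icc (0:ℝ) t, rp s with hFdef
  set G : ℝ → ℝ := fun t => ∫ s in Icc (0:ℝ) t, rm s with hGdef
  have hF0 : F 0 = 0 := by
    simp only [hFdef, Icc_self]
    rw [Measure.restrict_eq_zero.mpr (measure_singleton 0), integral_zero_measure]
  have hG0 : G 0 = 0 := by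
    simp only [hGdef, Icc_self]
    rw [Measure.restrict_eq_zero.mpr (measure_singleton 0), integral_zero_measure]
  have mono : ∀ (f : ℝ → ℝ), (∀ x, 0 ≤ f x) → IntegrableOn f (Icc 0 T) →
      ∀ a b : ℝ, a ≤ b → b ≤ T →
      (∫ s in Icc (0:ℝ) a, f s) ≤ ∫ s in Icc (0:ℝ) b, f s := by
    intro f hf0 hfi a b hab hbT
    exact setIntegral_mono_set (hfi.mono_set (Icc_subset_Icc le_rfl hbT))
      (Filter.Eventually.of_forall hf0) ((Icc_subset_Icc le_rfl hab).eventuallyLE)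
  have hFmono := mono rp hrp0 hrpi
  have hGmono := mono rm hrm0 hrmi
  have hFnn : ∀ t, 0 ≤ F t := fun t =>
    setIntegral_nonneg measurableSet_Icc (fun x _ => hrp0 x)
  have hGnn : ∀ t, 0 ≤ G t := fun t =>
    setIntegral_nonneg measurableSet_Icc (fun x _ => hrm0 x)
  have hFcont : ContinuousOn F (Icc 0 T) :=
    intervalIntegral.continuousOn_primitive_Icc hrpi
  have hGcont : ContinuousOn G (Icc 0 T) :=
    intervalIntegral.continuousOn_primitive_Icc hrmi
  -- the key equivalence: for s, t ∈ [0,T], ξ s ≤ t ↔ F s ≤ G t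
  have hkey : ∀ t ∈ Icc (0:ℝ) T, ∀ s ∈ Icc (0:ℝ) T, (ξ s ≤ t ↔ F s ≤ G t) := by
    intro t ht s hs
    obtain ⟨⟨hξmem, hξeq⟩, hξmin⟩ := hξ s hs
    constructor
    · intro h
      calc F s = G (ξ s) := hξeq.symm
        _ ≤ G t := hGmono _ _ h ht.2
    · intro h
      have h0 : G 0 ≤ F s := by rw [hG0]; exact hFnn s
      obtain ⟨s', hs', hGs'⟩ :=
        intermediate_value_Icc ht.1 (hGcont.mono (Icc_subset_Icc le_rfl ht.2)) ⟨h0, h⟩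
      exact le_trans (hξmin ⟨⟨hs'.1, hs'.2.trans ht.2⟩, hGs'⟩) hs'.2
  -- Part 1
  have part1 : ∀ t ∈ Icc (0:ℝ) T,
      (∫ s in {s | s ∈ Icc (0:ℝ) T ∧ ξ s ∈ Icc (0:ℝ) t}, rp s) = G t := by
    intro t ht
    have hset : {s | s ∈ Icc (0:ℝ) T ∧ ξ s ∈ Icc (0:ℝ) t}
        = Icc (0:ℝ) T ∩ F ⁻¹' (Iic (G t)) := by
      ext s
      simp only [mem_setOf_eq, mem_inter_iff, mem_preimage, mem_Iic, mem_Icc]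
      constructor
      · rintro ⟨hs, hξs⟩
        exact ⟨hs, (hkey t ht s hs).1 hξs.2⟩
      · rintro ⟨hs, hFs⟩
        exact ⟨hs, (hξ s hs).1.1.1, (hkey t ht s hs).2 hFs⟩
    set E := Icc (0:ℝ) T ∩ F ⁻¹' (Iic (G t)) with hEdef
    have hE0 : (0:ℝ) ∈ E := ⟨⟨le_rfl, hT.le⟩, by
      simp only [mem_preimage, mem_Iic, hF0]; exact hGnn t⟩
    have hEbdd : BddAbove E := ⟨T, fun s hs => hs.1.2⟩
    have hEclosed : IsClosed E :=
      hFcont.preimage_isClosed_of_isClosed isClosed_Icc isClosed_Iic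
    have hu := hEclosed.csSup_mem ⟨0, hE0⟩ hEbdd
    set u := sSup E with hudef
    have huT : u ∈ Icc (0:ℝ) T := hu.1
    have hFu : F u ≤ G t := hu.2
    have hEeq : E = Icc 0 u := by
      ext s
      constructor
      · intro hs; exact ⟨hs.1.1, le_csSup hEbdd hs⟩
      · intro hs
        refine ⟨⟨hs.1, hs.2.trans huT.2⟩, ?_⟩
        simp only [mem_preimage, mem_Iic]
        exact le_trans (hFmono _ _ hs.2 huT.2) hFu
    -- IVT for F gives a point u' with F u' = G t, hence F u = G t
    have hGt : G t ∈ Icc (F 0) (F T) := by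
      constructor
      · rw [hF0]; exact hGnn t
      · rw [show F T = G T from hTeq]; exact hGmono _ _ ht.2 le_rfl
    obtain ⟨u', hu', hFu'⟩ := intermediate_value_Icc hT.le hFcont hGt
    have hu'mem : u' ∈ E := ⟨hu', by simp only [mem_preimage, mem_Iic, hFu', le_refl]⟩
    have : G t ≤ F u := by
      rw [← hFu']
      exact hFmono _ _ (le_csSup hEbdd hu'mem) huT.2
    rw [hset, hEeq]
    exact le_antisymm hFu this
  -- abbreviations for the measures
  set μp := (volume.restrict (Icc (0:ℝ) T)).withDensity fun t => ENNReal.ofReal (rp t)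
    with hμpdef
  set ν := (volume.restrict (Icc (0:ℝ) T)).withDensity fun t => ENNReal.ofReal (rm t)
    with hνdef
  haveI : IsFiniteMeasure μp := isFiniteMeasure_withDensity_ofReal hrpi.2
  haveI : IsFiniteMeasure (μp.map ξ) := by
    refine ⟨?_⟩
    rw [Measure.map_apply hξmeas MeasurableSet.univ]
    exact measure_lt_top μp _
  -- computing the measures of Iic a
  have hμapply : ∀ a : ℝ, (μp.map ξ) (Iic a)
      = ENNReal.ofReal (∫ s in ξ ⁻¹' (Iic a) ∩ Icc (0:ℝ) T, rp s) := by
    intro a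
    have hmeas : MeasurableSet (ξ ⁻¹' (Iic a)) := hξmeas measurableSet_Iic
    rw [Measure.map_apply hξmeas measurableSet_Iic, hμpdef, withDensity_apply _ hmeas,
      Measure.restrict_restrict hmeas,
      ofReal_integral_eq_lintegral_ofReal (hrpi.mono_set inter_subset_right)
        (Filter.Eventually.of_forall hrp0)]
  have hνapply : ∀ a : ℝ, ν (Iic a)
      = ENNReal.ofReal (∫ s in Iic a ∩ Icc (0:ℝ) T, rm s) := by
    intro a
    rw [hνdef, withDensity_apply _ measurableSet_Iic,
      Measure.restrict_restrict measurableSet_Iic,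
      ofReal_integral_eq_lintegral_ofReal (hrmi.mono_set inter_subset_right)
        (Filter.Eventually.of_forall hrm0)]
  have hmap : μp.map ξ = ν := by
    refine Measure.ext_of_Iic (μp.map ξ) ν (fun a => ?_)
    rw [hμapply a, hνapply a]
    rcases lt_or_ge a 0 with ha | ha
    · have h1 : ξ ⁻¹' (Iic a) ∩ Icc (0:ℝ) T = ∅ := by
        ext s
        simp only [mem_inter_iff, mem_preimage, mem_Iic, mem_empty_iff_false, iff_false,
          not_and]
        intro hξa hs
        exact absurd (le_trans ((hξ s hs).1.1.1) hξa) (not_le.mpr ha)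
      have h2 : Iic a ∩ Icc (0:ℝ) T = ∅ := by
        ext s
        simp only [mem_inter_iff, mem_Iic, mem_Icc, mem_empty_iff_false, iff_false, not_and]
        intro hsa hs0 _
        exact absurd (le_trans hs0 hsa) (not_le.mpr ha)
      rw [h1, h2]
      simp
    rcases le_or_gt a T with haT | haT
    · -- 0 ≤ a ≤ T : use part1
      have h1 : ξ ⁻¹' (Iic a) ∩ Icc (0:ℝ) T
          = {s | s ∈ Icc (0:ℝ) T ∧ ξ s ∈ Icc (0:ℝ) a} := by
        ext s
        simp only [mem_inter_iff, mem_preimage, mem_Iic, mem_setOf_eq, mem_Icc]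
        constructor
        · rintro ⟨hξa, hs⟩; exact ⟨hs, (hξ s hs).1.1.1, hξa⟩
        · rintro ⟨hs, _, hξa⟩; exact ⟨hξa, hs⟩
      have h2 : Iic a ∩ Icc (0:ℝ) T = Icc (0:ℝ) a := by
        ext s
        simp only [mem_inter_iff, mem_Iic, mem_Icc]
        constructor
        · rintro ⟨hsa, hs0, _⟩; exact ⟨hs0, hsa⟩
        · rintro ⟨hs0, hsa⟩; exact ⟨hsa, hs0, hsa.trans haT⟩
      rw [h1, h2]
      exact congrArg ENNReal.ofReal (part1 a ⟨ha, haT⟩)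
    · -- a > T
      have h1 : ξ ⁻¹' (Iic a) ∩ Icc (0:ℝ) T = Icc (0:ℝ) T := by
        ext s
        simp only [mem_inter_iff, mem_preimage, mem_Iic]
        refine ⟨fun h => h.2, fun hs => ⟨le_trans ((hξ s hs).1.1.2) haT.le, hs⟩⟩
      have h2 : Iic a ∩ Icc (0:ℝ) T = Icc (0:ℝ) T := by
        ext s
        simp only [mem_inter_iff, mem_Iic, mem_Icc]
        exact ⟨fun h => h.2, fun hs => ⟨hs.2.trans haT.le, hs⟩⟩
      rw [h1, h2]
      exact congrArg ENNReal.ofReal hTeq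
  refine ⟨part1, hmap, ?_⟩
  rw [hmap, hνdef]
  exact (withDensity_absolutelyContinuous _ _).trans
    (Measure.absolutelyContinuous_of_le Measure.restrict_le_self)
end

section
/- Let 0 ≤ a ≤ b, τ ≥ 0, ν > 0, and let g, g⁻: ℝ → [0,∞) be locally integrable with g⁻(t) ≤ ν for almost every t ∈ [a+τ, b+τ]. Define q(t) := ∫₀ᵗ g dσ − ∫₀^{t+τ} g⁻ dσ. If q(a) ≥ 0, then q(t) ≥ ∫ₐᵗ g dσ − ν·(t − a) for all t ∈ [a, b]. In particular, if g(t) ≥ ν + φ(t) for almost every t ∈ [a,b] with φ ≥ 0 locally integrable, then q(t) ≥ ∫ₐᵗ φ dσ for all t ∈ [a,b]. -/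
open MeasureTheory Set

/-!
The queue at time `t` is the queue at time `a` plus what entered during `[a, t]` minus what left
during `[a + τ, t + τ]`. The queue at `a` is nonnegative and the outflow over `[a + τ, t + τ]` is
at most `ν (t - a)`, so `q t ≥ ∫ₐᵗ g - ν (t - a)`; when `g ≥ ν + φ` the right-hand side is at
least `∫ₐᵗ φ`.
-/

section IccIntegral

variable {f g φ : ℝ → ℝ} {x y z c : ℝ}

theorem setIntegral_Icc_add_setIntegral_Icc (hf : IntegrableOn f (Icc x z))
    (hxy : x ≤ y) (hyz : y ≤ z) :
    (∫ s in Icc x y, f s) + ∫ s in Icc y z, f s = ∫ s in Icc x z, f s := by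
  simp only [integral_Icc_eq_integral_Ioc]
  rw [← Ioc_union_Ioc_eq_Ioc hxy hyz, setIntegral_union (Ioc_disjoint_Ioc_of_le le_rfl)
    measurableSet_Ioc (hf.mono_set (Ioc_subset_Icc_self.trans (Icc_subset_Icc_right hyz)))
    (hf.mono_set (Ioc_subset_Icc_self.trans (Icc_subset_Icc_left hxy)))]

theorem setIntegral_Icc_const (hxy : x ≤ y) : ∫ _ in Icc x y, c = c * (y - x) := by
  rw [setIntegral_const, Real.volume_real_Icc_of_le hxy, smul_eq_mul, mul_comm]

theorem setIntegral_Icc_le_of_ae_le (hf : IntegrableOn f (Icc x y)) (hxy : x ≤ y)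
    (hfc : ∀ᵐ s, s ∈ Icc x y → f s ≤ c) :
    ∫ s in Icc x y, f s ≤ c * (y - x) := by
  rw [← setIntegral_Icc_const hxy]
  exact setIntegral_mono_on_ae hf (integrableOn_const measure_Icc_lt_top.ne) measurableSet_Icc hfc

theorem le_setIntegral_Icc_of_ae_const_add_le (hφ : IntegrableOn φ (Icc x y))
    (hg : IntegrableOn g (Icc x y)) (hxy : x ≤ y) (hφg : ∀ᵐ s, s ∈ Icc x y → c + φ s ≤ g s) :
    c * (y - x) + ∫ s in Icc x y, φ s ≤ ∫ s in Icc x y, g s := by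
  have hc : IntegrableOn (fun _ ↦ c) (Icc x y) := integrableOn_const measure_Icc_lt_top.ne
  rw [← setIntegral_Icc_const hxy, ← integral_add hc hφ]
  exact setIntegral_mono_on_ae (hc.add hφ) hg measurableSet_Icc hφg

end IccIntegral

noncomputable def vickreyQueue (τ : ℝ) (g gm : ℝ → ℝ) (t : ℝ) : ℝ :=
  (∫ s in Icc 0 t, g s) - ∫ s in Icc 0 (t + τ), gm s

section VickreyQueue

variable {τ ν a t : ℝ} {g gm : ℝ → ℝ}

theorem vickreyQueue_eq_add (hg : LocallyIntegrable g) (hgm : LocallyIntegrable gm)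
    (ha : 0 ≤ a) (haτ : 0 ≤ a + τ) (hat : a ≤ t) :
    vickreyQueue τ g gm t =
      vickreyQueue τ g gm a + (∫ s in Icc a t, g s) - ∫ s in Icc (a + τ) (t + τ), gm s := by
  unfold vickreyQueue
  rw [← setIntegral_Icc_add_setIntegral_Icc (hg.integrableOn_isCompact isCompact_Icc) ha hat,
    ← setIntegral_Icc_add_setIntegral_Icc (hgm.integrableOn_isCompact isCompact_Icc) haτ
      (by linarith)]
  ring

theorem setIntegral_Icc_sub_le_vickreyQueue (hg : LocallyIntegrable g)
    (hgm : LocallyIntegrable gm) (ha : 0 ≤ a) (haτ : 0 ≤ a + τ) (hat : a ≤ t)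
    (hgmν : ∀ᵐ s, s ∈ Icc (a + τ) (t + τ) → gm s ≤ ν) (hqa : 0 ≤ vickreyQueue τ g gm a) :
    (∫ s in Icc a t, g s) - ν * (t - a) ≤ vickreyQueue τ g gm t := by
  have hout : ∫ s in Icc (a + τ) (t + τ), gm s ≤ ν * (t - a) := by
    have := setIntegral_Icc_le_of_ae_le (hgm.integrableOn_isCompact isCompact_Icc)
      (by linarith) hgmν
    rwa [add_sub_add_right_eq_sub] at this
  rw [vickreyQueue_eq_add hg hgm ha haτ hat]
  linarith

end VickreyQueue

theorem vickrey_queue_lower_bound_general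
    (a b τ ν : ℝ) (ha : 0 ≤ a) (hτ : 0 ≤ τ)
    (g gm : ℝ → ℝ)
    (hgloc : LocallyIntegrable g) (hgmloc : LocallyIntegrable gm)
    (hgmb : ∀ᵐ t, t ∈ Icc (a + τ) (b + τ) → gm t ≤ ν)
    (hqa : 0 ≤ (∫ s in Icc (0:ℝ) a, g s) - ∫ s in Icc (0:ℝ) (a + τ), gm s) :
    (∀ t ∈ Icc a b,
      (∫ s in Icc a t, g s) - ν * (t - a) ≤
        (∫ s in Icc (0:ℝ) t, g s) - ∫ s in Icc (0:ℝ) (t + τ), gm s) ∧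
    ∀ φ : ℝ → ℝ, (∀ t, 0 ≤ φ t) → LocallyIntegrable φ →
      (∀ᵐ t, t ∈ Icc a b → ν + φ t ≤ g t) →
      ∀ t ∈ Icc a b,
        (∫ s in Icc a t, φ s) ≤
          (∫ s in Icc (0:ℝ) t, g s) - ∫ s in Icc (0:ℝ) (t + τ), gm s := by
  have queue_bound : ∀ t ∈ Icc a b, (∫ s in Icc a t, g s) - ν * (t - a) ≤ vickreyQueue τ g gm t :=
    fun t ⟨hat, htb⟩ ↦ setIntegral_Icc_sub_le_vickreyQueue hgloc hgmloc ha (by linarith) hat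
      (hgmb.mono fun s hs hmem ↦ hs (Icc_subset_Icc_right (by linarith) hmem)) hqa
  refine ⟨queue_bound, fun φ _ hφ hφg t ht ↦ ?_⟩
  have hexcess := le_setIntegral_Icc_of_ae_const_add_le (hφ.integrableOn_isCompact isCompact_Icc)
    (hgloc.integrableOn_isCompact isCompact_Icc) ht.1
    (hφg.mono fun s hs hmem ↦ hs (Icc_subset_Icc_right ht.2 hmem))
  have := queue_bound t ht
  unfold vickreyQueue at this
  linarith

theorem vickrey_queue_lower_bound
    (a b τ ν : ℝ) (ha : 0 ≤ a) (hab : a ≤ b) (hτ : 0 ≤ τ) (hν : 0 < ν)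
    (g gm : ℝ → ℝ) (hg0 : ∀ t, 0 ≤ g t) (hgm0 : ∀ t, 0 ≤ gm t)
    (hgloc : LocallyIntegrable g) (hgmloc : LocallyIntegrable gm)
    (hgmb : ∀ᵐ t, t ∈ Icc (a + τ) (b + τ) → gm t ≤ ν)
    (hqa : 0 ≤ (∫ s in Icc (0:ℝ) a, g s) - ∫ s in Icc (0:ℝ) (a + τ), gm s) :
    (∀ t ∈ Icc a b,
      (∫ s in Icc a t, g s) - ν * (t - a) ≤
        (∫ s in Icc (0:ℝ) t, g s) - ∫ s in Icc (0:ℝ) (t + τ), gm s) ∧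
    ∀ φ : ℝ → ℝ, (∀ t, 0 ≤ φ t) → LocallyIntegrable φ →
      (∀ᵐ t, t ∈ Icc a b → ν + φ t ≤ g t) →
      ∀ t ∈ Icc a b,
        (∫ s in Icc a t, φ s) ≤
          (∫ s in Icc (0:ℝ) t, g s) - ∫ s in Icc (0:ℝ) (t + τ), gm s :=
  vickrey_queue_lower_bound_general a b τ ν ha hτ g gm hgloc hgmloc hgmb hqa
end

section
/- Let b > 0, ν > 0, let q: [0,b] → ℝ be absolutely continuous with q(0) = 0 and q(t) ≥ 0 for all t ∈ [0,b], and let g ∈ L¹([0,b]) with g(t) ≤ ν for almost every t ∈ [0,b]. Suppose that for almost every t ∈ [0,b] with q(t) > 0 one has q'(t) ≤ g(t) − ν. Then q(t) = 0 for all t ∈ [0,b]. -/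
open MeasureTheory Set

/-- A real function is *absolutely continuous* on the interval `[a,b]`. -/
def ACOn (f : ℝ → ℝ) (a b : ℝ) : Prop :=
  ∀ ε > 0, ∃ δ > 0, ∀ n : ℕ, ∀ c d : Fin n → ℝ,
    (∀ k, c k ∈ Set.Icc a b ∧ d k ∈ Set.Icc a b ∧ c k ≤ d k) →
    (Pairwise fun k l => Disjoint (Set.Ioo (c k) (d k)) (Set.Ioo (c l) (d l))) →
    (∑ k, (d k - c k)) < δ → (∑ k, |f (d k) - f (c k)|) < ε

lemma Ioo_disjoint_of_le' {a b c d : ℝ} (h : b ≤ c) :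
    Disjoint (Ioo a b) (Ioo c d) := by
  rw [Set.disjoint_left]
  rintro x ⟨_, h1⟩ ⟨h2, _⟩
  linarith

lemma ACOn.continuousOn {q : ℝ → ℝ} {b : ℝ} (hac : ACOn q 0 b) :
    ContinuousOn q (Icc 0 b) := by
  rw [Metric.continuousOn_iff]
  intro x hx ε hε
  obtain ⟨δ, hδ, H⟩ := hac ε hε
  refine ⟨δ, hδ, fun y hy hyx => ?_⟩
  have h1 := H 1 (fun _ => min x y) (fun _ => max x y) ?_ ?_ ?_
  · rw [Real.dist_eq]
    calc |q y - q x| = |q (max x y) - q (min x y)| := by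
          rcases le_total x y with h | h
          · rw [max_eq_right h, min_eq_left h]
          · rw [max_eq_left h, min_eq_right h, abs_sub_comm]
    _ ≤ ∑ _k : Fin 1, |q (max x y) - q (min x y)| := by simp
    _ < ε := h1
  · intro k
    refine ⟨?_, ?_, min_le_max⟩
    · rcases le_total x y with h | h
      · rwa [min_eq_left h]
      · rwa [min_eq_right h]
    · rcases le_total x y with h | h
      · rwa [max_eq_right h]
      · rwa [max_eq_left h]
  · exact Subsingleton.pairwise
  · have h2 : (∑ _k : Fin 1, (max x y - min x y)) = max x y - min x y := by simp
    rw [h2, max_sub_min_eq_abs]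
    rw [Real.dist_eq] at hyx
    exact hyx

lemma evar_le_of_small {q : ℝ → ℝ} {b : ℝ} {δ : ℝ} (hδ : 0 < δ)
    (H : ∀ n : ℕ, ∀ c d : Fin n → ℝ,
      (∀ k, c k ∈ Set.Icc 0 b ∧ d k ∈ Set.Icc 0 b ∧ c k ≤ d k) →
      (Pairwise fun k l => Disjoint (Set.Ioo (c k) (d k)) (Set.Ioo (c l) (d l))) →
      (∑ k, (d k - c k)) < δ → (∑ k, |q (d k) - q (c k)|) < 1)
    {x y : ℝ} (hx : x ∈ Icc (0:ℝ) b) (hy : y ∈ Icc (0:ℝ) b) (hxy : y - x < δ) :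
    eVariationOn q (Icc x y) ≤ 1 := by
  refine iSup_le ?_
  rintro ⟨n, u, hu, us⟩
  dsimp only
  have husub : ∀ i, u i ∈ Icc (0:ℝ) b := fun i =>
    ⟨hx.1.trans (us i).1, (us i).2.trans hy.2⟩
  have hmain := H n (fun k : Fin n => u k) (fun k : Fin n => u (k + 1)) ?_ ?_ ?_
  · calc (∑ i ∈ Finset.range n, edist (q (u (i + 1))) (q (u i)))
        = ∑ i ∈ Finset.range n, ENNReal.ofReal |q (u (i + 1)) - q (u i)| := by
          refine Finset.sum_congr rfl fun i _ => ?_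
          rw [edist_dist, Real.dist_eq]
    _ = ENNReal.ofReal (∑ i ∈ Finset.range n, |q (u (i + 1)) - q (u i)|) :=
          (ENNReal.ofReal_sum_of_nonneg fun i _ => abs_nonneg _).symm
    _ ≤ 1 := by
          rw [← ENNReal.ofReal_one]
          apply ENNReal.ofReal_le_ofReal
          rw [← Fin.sum_univ_eq_sum_range (fun i => |q (u (i + 1)) - q (u i)|) n] at *
          exact hmain.le
  · exact fun k => ⟨husub k, husub (k + 1), hu (Nat.le_succ k)⟩
  · intro k l hkl
    rcases lt_or_gt_of_ne hkl with h | h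
    · exact Ioo_disjoint_of_le' (hu (by omega : (k:ℕ) + 1 ≤ (l:ℕ)))
    · exact (Ioo_disjoint_of_le' (hu (by omega : (l:ℕ) + 1 ≤ (k:ℕ)))).symm
  · have : (∑ k : Fin n, (u ((k:ℕ) + 1) - u (k:ℕ))) = u n - u 0 := by
      rw [Fin.sum_univ_eq_sum_range (fun i => u (i + 1) - u i) n]
      exact Finset.sum_range_sub u n
    rw [this]
    have h1 : u n ≤ y := (us n).2
    have h2 : x ≤ u 0 := (us 0).1
    linarith

lemma acon_bv {q : ℝ → ℝ} {b : ℝ} (hb : 0 < b) (hac : ACOn q 0 b) :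
    BoundedVariationOn q (Icc 0 b) := by
  obtain ⟨δ, hδ, H⟩ := hac 1 one_pos
  set T : ℕ → ℝ := fun n => min b (n * (δ / 2)) with hT
  have hT0 : T 0 = 0 := by simp [hT, hb.le]
  have hTmem : ∀ n, T n ∈ Icc (0:ℝ) b := fun n =>
    ⟨le_min hb.le (by positivity), min_le_left _ _⟩
  have hTmono : Monotone T := fun m n hmn =>
    min_le_min le_rfl (by
      have : (m:ℝ) ≤ n := Nat.cast_le.mpr hmn
      nlinarith)
  have step : ∀ n : ℕ, eVariationOn q (Icc 0 b ∩ Icc 0 (T n)) ≤ n := by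
    intro n
    induction n with
    | zero =>
      rw [hT0]
      have hsub : Icc (0:ℝ) b ∩ Icc 0 0 ⊆ {0} := fun z hz => by
        have := hz.2; simp only [Set.Icc_self, Set.mem_singleton_iff] at this ⊢; exact this
      rw [eVariationOn.subsingleton q (fun z hz w hw => by
        rw [hsub hz, hsub hw])]
      simp
    | succ n ih =>
      have hsplit := eVariationOn.Icc_add_Icc q (a := 0) (b := T n) (c := T (n+1))
        (hTmem n).1 (hTmono (Nat.le_succ n)) (hTmem n)
      rw [← hsplit]
      have hmid : Icc (0:ℝ) b ∩ Icc (T n) (T (n+1)) = Icc (T n) (T (n+1)) :=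
        inter_eq_self_of_subset_right (Icc_subset_Icc (hTmem n).1 (hTmem (n+1)).2)
      have hlen : T (n+1) - T n < δ := by
        rcases le_total b ((n:ℝ) * (δ / 2)) with h | h
        · have h1 : T n = b := min_eq_left h
          have h2 : T (n+1) = b := min_eq_left (by push_cast; nlinarith)
          rw [h1, h2]; linarith
        · have h1 : T n = (n:ℝ) * (δ / 2) := min_eq_right h
          have h2 : T (n+1) ≤ ((n:ℝ)+1) * (δ / 2) := by
            calc T (n+1) ≤ ((n+1 : ℕ) : ℝ) * (δ/2) := min_le_right _ _
            _ = ((n:ℝ)+1)*(δ/2) := by push_cast; ring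
          rw [h1]; nlinarith
      have hsmall : eVariationOn q (Icc (T n) (T (n+1))) ≤ 1 :=
        evar_le_of_small hδ H (hTmem n) (hTmem (n+1)) hlen
      rw [hmid]
      calc eVariationOn q (Icc 0 b ∩ Icc 0 (T n)) + eVariationOn q (Icc (T n) (T (n+1)))
          ≤ (n : ENNReal) + 1 := add_le_add ih hsmall
      _ = ((n+1 : ℕ) : ENNReal) := by push_cast; ring
  obtain ⟨n, hn⟩ := exists_nat_ge (b / (δ / 2))
  have hTn : T n = b := min_eq_left (by
    rw [div_le_iff₀ (by positivity)] at hn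
    linarith)
  have := step n
  rw [hTn, inter_eq_self_of_subset_right (Icc_subset_Icc le_rfl le_rfl)] at this
  exact ne_top_of_le_ne_top (ENNReal.natCast_ne_top n) this

/-!
STATEMENT 15 (general form of Claims `travarc d,e`):
Let `q : [0,b] → ℝ` be absolutely continuous, nonnegative, with `q(0) = 0`, and
`g ∈ L¹([0,b])` with `g ≤ ν` a.e. If at almost every time `t` with `q(t) > 0` the
derivative of `q` (within `[0,b]`) is at most `g(t) − ν`, then `q ≡ 0` on `[0,b]`:
no queue forms when the inflow rate never exceeds the capacity.
-/
theorem no_queue_when_inflow_below_capacity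
    (b ν : ℝ) (hb : 0 < b) (hν : 0 < ν) (q g : ℝ → ℝ)
    (hac : ACOn q 0 b) (hq0 : q 0 = 0) (hqnn : ∀ t ∈ Icc (0:ℝ) b, 0 ≤ q t)
    (hgi : IntegrableOn g (Icc 0 b))
    (hgb : ∀ᵐ t ∂(volume.restrict (Icc (0:ℝ) b)), g t ≤ ν)
    (hq' : ∀ᵐ t ∂(volume.restrict (Icc (0:ℝ) b)),
      0 < q t → ∀ d : ℝ, HasDerivWithinAt q d (Icc (0:ℝ) b) t → d ≤ g t - ν) :
    ∀ t ∈ Icc (0:ℝ) b, q t = 0 := by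
  have hcont : ContinuousOn q (Icc 0 b) := hac.continuousOn
  have hbv : LocallyBoundedVariationOn q (Icc 0 b) :=
    (acon_bv hb hac).locallyBoundedVariationOn
  have hdiff := hbv.ae_differentiableWithinAt_of_mem
  have hgb' : ∀ᵐ t ∂(volume : Measure ℝ), t ∈ Icc (0:ℝ) b → g t ≤ ν :=
    ae_imp_of_ae_restrict hgb
  have hq'' : ∀ᵐ t ∂(volume : Measure ℝ), t ∈ Icc (0:ℝ) b →
      (0 < q t → ∀ d : ℝ, HasDerivWithinAt q d (Icc (0:ℝ) b) t → d ≤ g t - ν) :=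
    ae_imp_of_ae_restrict hq'
  set P : ℝ → Prop := fun x => DifferentiableWithinAt ℝ q (Icc 0 b) x ∧ g x ≤ ν ∧
    (0 < q x → ∀ d : ℝ, HasDerivWithinAt q d (Icc (0:ℝ) b) x → d ≤ g x - ν) with hP
  have hPae : ∀ᵐ x ∂(volume : Measure ℝ), x ∈ Icc (0:ℝ) b → P x := by
    filter_upwards [hdiff, hgb', hq''] with x h1 h2 h3 hx
    exact ⟨h1 hx, h2 hx, h3 hx⟩
  set N : Set ℝ := {x | x ∈ Icc (0:ℝ) b ∧ ¬ P x} with hNdef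
  have hN : volume N = 0 := by
    have h := hPae
    rw [Filter.eventually_iff, mem_ae_iff] at h
    refine measure_mono_null ?_ h
    intro x hx
    simp only [mem_compl_iff, mem_setOf_eq]
    intro hcontra
    exact hx.2 (hcontra hx.1)
  -- the key quantitative lemma
  have key : ∀ s₀ t₀ : ℝ, s₀ ∈ Icc (0:ℝ) b → t₀ ∈ Icc (0:ℝ) b → s₀ ≤ t₀ →
      (∀ y ∈ Icc s₀ t₀, 0 < q y) → ∀ η > (0:ℝ), ∀ ε > (0:ℝ),
      q t₀ - q s₀ ≤ η * (t₀ - s₀) + ε := by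
    intro s₀ t₀ hs₀ ht₀ hst hpos η hη ε hε
    obtain ⟨δ, hδ, HAC⟩ := hac ε hε
    obtain ⟨U, hNU, hUopen, hUvol⟩ :=
      Set.exists_isOpen_lt_of_lt N (ENNReal.ofReal δ)
        (by rw [hN]; exact ENNReal.ofReal_pos.mpr hδ)
    -- the "budget" sets
    set Sums : ℝ → Set ℝ := fun y => {r | ∃ n : ℕ, ∃ c d : Fin n → ℝ,
      (∀ k, c k ∈ Icc (0:ℝ) b ∧ d k ∈ Icc (0:ℝ) b ∧ c k ≤ d k ∧
        Ioo (c k) (d k) ⊆ U ∧ d k ≤ y) ∧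
      (Pairwise fun k l => Disjoint (Ioo (c k) (d k)) (Ioo (c l) (d l))) ∧
      r = ∑ k, (q (d k) - q (c k))} with hSums
    have h0mem : ∀ y : ℝ, (0:ℝ) ∈ Sums y := by
      intro y
      refine ⟨0, (fun k => k.elim0), (fun k => k.elim0), fun k => k.elim0, ?_, by simp⟩
      intro k l h
      exact k.elim0
    have hsum_lt : ∀ y r, r ∈ Sums y → r < ε := by
      rintro y r ⟨n, c, d, hk, hpair, rfl⟩
      have hlen : (∑ k, (d k - c k)) < δ := by
        have hmeas : volume (⋃ k, Ioo (c k) (d k)) = ∑ k, volume (Ioo (c k) (d k)) := by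
          rw [measure_iUnion hpair (fun k => measurableSet_Ioo), tsum_fintype]
        have hsub : (⋃ k, Ioo (c k) (d k)) ⊆ U := iUnion_subset fun k => (hk k).2.2.2.1
        have hlt : (∑ k, volume (Ioo (c k) (d k))) < ENNReal.ofReal δ := by
          rw [← hmeas]
          exact lt_of_le_of_lt (measure_mono hsub) hUvol
        have heq : (∑ k, volume (Ioo (c k) (d k)))
            = ENNReal.ofReal (∑ k, (d k - c k)) := by
          rw [ENNReal.ofReal_sum_of_nonneg (fun k _ => sub_nonneg.mpr (hk k).2.2.1)]
          exact Finset.sum_congr rfl fun k _ => Real.volume_Ioo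
        rw [heq] at hlt
        exact (ENNReal.ofReal_lt_ofReal_iff hδ).mp hlt
      calc (∑ k, (q (d k) - q (c k))) ≤ ∑ k, |q (d k) - q (c k)| :=
            Finset.sum_le_sum fun k _ => le_abs_self _
      _ < ε := HAC n c d (fun k => ⟨(hk k).1, (hk k).2.1, (hk k).2.2.1⟩) hpair hlen
    have hbdd : ∀ y, BddAbove (Sums y) := fun y =>
      ⟨ε, fun r hr => (hsum_lt y r hr).le⟩
    set ψ : ℝ → ℝ := fun y => sSup (Sums y) with hψ
    have hψle : ∀ y, ψ y ≤ ε := fun y =>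
      csSup_le ⟨0, h0mem y⟩ fun r hr => (hsum_lt y r hr).le
    have hψ0 : ∀ y, 0 ≤ ψ y := fun y => le_csSup (hbdd y) (h0mem y)
    have hψmono : ∀ {y y' : ℝ}, y ≤ y' → ψ y ≤ ψ y' := by
      intro y y' hyy
      refine csSup_le_csSup (hbdd y') ⟨0, h0mem y⟩ ?_
      rintro r ⟨n, c, d, hk, hpair, rfl⟩
      exact ⟨n, c, d, fun k => ⟨(hk k).1, (hk k).2.1, (hk k).2.2.1, (hk k).2.2.2.1,
        (hk k).2.2.2.2.trans hyy⟩, hpair, rfl⟩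
    have happend : ∀ y₁ y₂ : ℝ, y₁ ∈ Icc (0:ℝ) b → y₂ ∈ Icc (0:ℝ) b → y₁ ≤ y₂ →
        Ioo y₁ y₂ ⊆ U → ψ y₁ + (q y₂ - q y₁) ≤ ψ y₂ := by
      intro y₁ y₂ h1 h2 h12 hIU
      have hstep : ∀ r ∈ Sums y₁, r + (q y₂ - q y₁) ≤ ψ y₂ := by
        rintro r ⟨n, c, d, hk, hpair, rfl⟩
        refine le_csSup (hbdd y₂) ⟨n+1, Fin.snoc c y₁, Fin.snoc d y₂, ?_, ?_, ?_⟩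
        · intro k
          refine Fin.lastCases ?_ ?_ k
          · simp only [Fin.snoc_last]
            exact ⟨h1, h2, h12, hIU, le_rfl⟩
          · intro i
            simp only [Fin.snoc_castSucc]
            exact ⟨(hk i).1, (hk i).2.1, (hk i).2.2.1, (hk i).2.2.2.1,
              (hk i).2.2.2.2.trans h12⟩
        · intro k l hkl
          rcases Fin.eq_castSucc_or_eq_last k with ⟨i, rfl⟩ | rfl <;>
            rcases Fin.eq_castSucc_or_eq_last l with ⟨j, rfl⟩ | rfl
          · simp only [Fin.snoc_castSucc]
            exact hpair (fun h => hkl (congrArg Fin.castSucc h))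
          · simp only [Fin.snoc_castSucc, Fin.snoc_last]
            exact Ioo_disjoint_of_le' (hk i).2.2.2.2
          · simp only [Fin.snoc_castSucc, Fin.snoc_last]
            exact (Ioo_disjoint_of_le' (hk j).2.2.2.2).symm
          · exact absurd rfl hkl
        · rw [Fin.sum_univ_castSucc]
          simp only [Fin.snoc_castSucc, Fin.snoc_last]
          all_goals ring
      have h3 : ψ y₁ ≤ ψ y₂ - (q y₂ - q y₁) :=
        csSup_le ⟨0, h0mem y₁⟩ fun r hr => by linarith [hstep r hr]
      linarith
    -- the climbing set
    set S : Set ℝ := {y | y ∈ Icc s₀ t₀ ∧ q y - q s₀ ≤ η * (y - s₀) + ψ y} with hSdef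
    have hs₀S : s₀ ∈ S := ⟨⟨le_rfl, hst⟩, by simpa using hψ0 s₀⟩
    have hSne : S.Nonempty := ⟨s₀, hs₀S⟩
    have hSbdd : BddAbove S := ⟨t₀, fun y hy => hy.1.2⟩
    set z := sSup S with hz
    have hz_mem : z ∈ Icc s₀ t₀ :=
      ⟨le_csSup hSbdd hs₀S, csSup_le hSne fun y hy => hy.1.2⟩
    have hzb : z ∈ Icc (0:ℝ) b := ⟨hs₀.1.trans hz_mem.1, hz_mem.2.trans ht₀.2⟩
    have hzS : z ∈ S := by
      refine ⟨hz_mem, ?_⟩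
      obtain ⟨u, hu_mono, hu_tend, hu_mem⟩ := exists_seq_tendsto_sSup hSne hSbdd
      have hq_tend : Filter.Tendsto (fun n => q (u n)) Filter.atTop (nhds (q z)) := by
        apply ((hcont z hzb).tendsto).comp
        rw [tendsto_nhdsWithin_iff]
        exact ⟨hu_tend, Filter.Eventually.of_forall fun n =>
          ⟨hs₀.1.trans (hu_mem n).1.1, (hu_mem n).1.2.trans ht₀.2⟩⟩
      have hub : ∀ n, q (u n) - q s₀ - η * (u n - s₀) ≤ ψ z := by
        intro n
        have h1 := (hu_mem n).2
        have h2 : ψ (u n) ≤ ψ z := hψmono (le_csSup hSbdd (hu_mem n))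
        linarith
      have hlim : Filter.Tendsto (fun n => q (u n) - q s₀ - η * (u n - s₀))
          Filter.atTop (nhds (q z - q s₀ - η * (z - s₀))) := by
        apply Filter.Tendsto.sub
        · exact hq_tend.sub tendsto_const_nhds
        · exact (tendsto_const_nhds.mul (hu_tend.sub tendsto_const_nhds))
      have := le_of_tendsto hlim (Filter.Eventually.of_forall hub)
      linarith
    by_cases hyt : z < t₀
    · exfalso
      by_cases hyU : z ∈ U
      · obtain ⟨r, hr, hball⟩ := Metric.isOpen_iff.mp hUopen z hyU
        set y := min (z + r/2) t₀ with hydef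
        have hylt : z < y := lt_min (by linarith) hyt
        have hyle : y ≤ t₀ := min_le_right _ _
        have hyIcc : y ∈ Icc s₀ t₀ := ⟨hz_mem.1.trans hylt.le, hyle⟩
        have hyb' : y ∈ Icc (0:ℝ) b := ⟨hs₀.1.trans hyIcc.1, hyle.trans ht₀.2⟩
        have hsub : Ioo z y ⊆ U := by
          intro w hw
          apply hball
          rw [Metric.mem_ball, Real.dist_eq, abs_of_pos (by linarith [hw.1] : (0:ℝ) < w - z)]
          have : y ≤ z + r/2 := min_le_left _ _
          linarith [hw.2]
        have happ := happend z y hzb hyb' hylt.le hsub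
        have hmul : η * (z - s₀) ≤ η * (y - s₀) :=
          mul_le_mul_of_nonneg_left (by linarith) hη.le
        have hyS' : y ∈ S := ⟨hyIcc, by linarith [hzS.2]⟩
        exact absurd (le_csSup hSbdd hyS') (not_le.mpr hylt)
      · have hyP : P z := by
          by_contra h
          exact hyU (hNU ⟨hzb, h⟩)
        obtain ⟨hdiffz, hgle, himp⟩ := hyP
        have hqpos : 0 < q z := hpos z hz_mem
        have hder : HasDerivWithinAt q (derivWithin q (Icc 0 b) z) (Icc 0 b) z :=
          hdiffz.hasDerivWithinAt
        have hd0 : derivWithin q (Icc 0 b) z ≤ 0 := by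
          have := himp hqpos _ hder
          linarith
        rw [hasDerivWithinAt_iff_tendsto_slope] at hder
        have hlt : {w : ℝ | slope q z w < η} ∈ nhdsWithin z (Icc (0:ℝ) b \ {z}) :=
          hder (Iio_mem_nhds (lt_of_le_of_lt hd0 hη))
        obtain ⟨r, hr, hball⟩ := Metric.mem_nhdsWithin_iff.mp hlt
        set y := min (z + r/2) t₀ with hydef
        have hylt : z < y := lt_min (by linarith) hyt
        have hyle : y ≤ t₀ := min_le_right _ _
        have hyIcc : y ∈ Icc s₀ t₀ := ⟨hz_mem.1.trans hylt.le, hyle⟩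
        have hyb' : y ∈ Icc (0:ℝ) b := ⟨hs₀.1.trans hyIcc.1, hyle.trans ht₀.2⟩
        have hyD : y ∈ Metric.ball z r ∩ (Icc (0:ℝ) b \ {z}) := by
          refine ⟨?_, hyb', ?_⟩
          · rw [Metric.mem_ball, Real.dist_eq, abs_of_pos (by linarith : (0:ℝ) < y - z)]
            have : y ≤ z + r/2 := min_le_left _ _
            linarith
          · simp only [mem_singleton_iff]
            exact hylt.ne'
        have hslope : slope q z y < η := hball hyD
        rw [slope_def_field] at hslope
        have hstep : q y - q z ≤ η * (y - z) := by
          have h1 := (div_lt_iff₀ (by linarith : (0:ℝ) < y - z)).mp hslope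
          linarith
        have hmul : η * (z - s₀) + η * (y - z) = η * (y - s₀) := by ring
        have hψm : ψ z ≤ ψ y := hψmono hylt.le
        have hyS' : y ∈ S := ⟨hyIcc, by linarith [hzS.2]⟩
        exact absurd (le_csSup hSbdd hyS') (not_le.mpr hylt)
    · have hzt : z = t₀ := le_antisymm hz_mem.2 (not_lt.mp hyt)
      have h1 := hzS.2
      rw [hzt] at h1
      have h2 := hψle t₀
      linarith
  -- final assembly
  intro t ht
  refine le_antisymm ?_ (hqnn t ht)
  by_contra hqt
  push_neg at hqt
  set Z : Set ℝ := {y | y ∈ Icc 0 t ∧ q y = 0} with hZ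
  have h0Z : (0:ℝ) ∈ Z := ⟨⟨le_rfl, ht.1⟩, hq0⟩
  have hZbdd : BddAbove Z := ⟨t, fun y hy => hy.1.2⟩
  set s₀ := sSup Z with hs₀def
  have hs₀mem : s₀ ∈ Icc 0 t := ⟨le_csSup hZbdd h0Z, csSup_le ⟨0, h0Z⟩ fun y hy => hy.1.2⟩
  have hs₀b : s₀ ∈ Icc (0:ℝ) b := ⟨hs₀mem.1, hs₀mem.2.trans ht.2⟩
  have hqs₀ : q s₀ = 0 := by
    obtain ⟨u, hmono, htend, hmem⟩ := exists_seq_tendsto_sSup ⟨0, h0Z⟩ hZbdd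
    have h1 : Filter.Tendsto (fun n => q (u n)) Filter.atTop (nhds (q s₀)) := by
      apply ((hcont s₀ hs₀b).tendsto).comp
      rw [tendsto_nhdsWithin_iff]
      exact ⟨htend, Filter.Eventually.of_forall fun n =>
        ⟨(hmem n).1.1, (hmem n).1.2.trans ht.2⟩⟩
    have h2 : Filter.Tendsto (fun n => q (u n)) Filter.atTop (nhds 0) := by
      have : (fun n => q (u n)) = fun _ => (0:ℝ) := funext fun n => (hmem n).2
      rw [this]
      exact tendsto_const_nhds
    exact tendsto_nhds_unique h1 h2
  have hs₀lt : s₀ < t := by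
    rcases lt_or_eq_of_le hs₀mem.2 with h | h
    · exact h
    · rw [h] at hqs₀; rw [hqs₀] at hqt; exact absurd hqt (lt_irrefl 0)
  have hposmid : ∀ y, s₀ < y → y ≤ t → 0 < q y := by
    intro y h1 h2
    have hyb : y ∈ Icc (0:ℝ) b := ⟨hs₀b.1.trans h1.le, h2.trans ht.2⟩
    rcases (hqnn y hyb).lt_or_eq with h | h
    · exact h
    · exfalso
      have : y ∈ Z := ⟨⟨hyb.1, h2⟩, h.symm⟩
      exact absurd (le_csSup hZbdd this) (not_le.mpr h1)
  have hle : ∀ s', s₀ < s' → s' ≤ t → q t ≤ q s' := by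
    intro s' h1 h2
    have hs'b : s' ∈ Icc (0:ℝ) b := ⟨hs₀b.1.trans h1.le, h2.trans ht.2⟩
    have hkey := key s' t hs'b ht h2
      (fun y hy => hposmid y (lt_of_lt_of_le h1 hy.1) hy.2)
    by_contra hlt
    push_neg at hlt
    set ε' := q t - q s' with hε'
    have hε'pos : 0 < ε' := by simp only [hε']; linarith
    have hbig := hkey (ε' / (2 * (t - s') + 2)) (div_pos hε'pos (by linarith)) (ε' / 4) (by positivity)
    have hfrac : ε' / (2 * (t - s') + 2) * (t - s') ≤ ε' / 2 := by
      rw [div_mul_eq_mul_div, div_le_div_iff₀ (by linarith) (by norm_num)]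
      nlinarith
    linarith
  -- take s' → s₀ from the right
  have hlim : q t ≤ q s₀ := by
    set u : ℕ → ℝ := fun n => s₀ + (t - s₀) / (n + 1) with hu
    have humem : ∀ n : ℕ, s₀ < u n ∧ u n ≤ t := by
      intro n
      constructor
      · have : (0:ℝ) < (t - s₀) / (n + 1) := div_pos (by linarith) (by positivity)
        simp only [hu]; linarith
      · simp only [hu]
        have h1 : (t - s₀) / ((n:ℝ) + 1) ≤ (t - s₀) := by
          apply div_le_self (by linarith) (by push_cast; linarith [Nat.cast_nonneg (α := ℝ) n])
        linarith
    have htendu : Filter.Tendsto u Filter.atTop (nhds s₀) := by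
      have h1 : Filter.Tendsto (fun n : ℕ => (t - s₀) * (1 / ((n:ℝ) + 1))) Filter.atTop
          (nhds ((t - s₀) * 0)) :=
        tendsto_one_div_add_atTop_nhds_zero_nat.const_mul (t - s₀)
      rw [mul_zero] at h1
      have h2 := Filter.Tendsto.const_add s₀ h1
      rw [add_zero] at h2
      convert h2 using 2 with n
      rw [hu]
      field_simp
    have hqtend : Filter.Tendsto (fun n => q (u n)) Filter.atTop (nhds (q s₀)) := by
      apply ((hcont s₀ hs₀b).tendsto).comp
      rw [tendsto_nhdsWithin_iff]
      exact ⟨htendu, Filter.Eventually.of_forall fun n =>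
        ⟨hs₀b.1.trans (humem n).1.le, (humem n).2.trans ht.2⟩⟩
    exact ge_of_tendsto hqtend (Filter.Eventually.of_forall fun n =>
      hle (u n) (humem n).1 (humem n).2)
  rw [hqs₀] at hlim
  exact absurd hqt (not_lt.mpr hlim)
end
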